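/- arXiv:2011.03008 — 8 statements merged into one kernel-verified Lean document; each statement's English description precedes it below -/
import Mathlib

section
/- Let A be a commutative ring, S ⊆ A a multiplicatively closed subset, and N a submodule of an A-module M. Then M is S-noetherian if and only if both N and M/N are S-noetherian. -/
/-- A submodule `N` is `S`-finite if there is a finitely generated submodule `F ⊆ N`
and `s ∈ S` with `N • s ⊆ F`. -/
def SFin {A : Type*} [CommRing A] (S : Submonoid A) {M : Type*} [AddCommGroup M]
    [Module A M] (N : Submodule A M) : Prop :=
  ∃ F : Submodule A M, F.FG ∧ F ≤ N ∧ ∃ s ∈ S, ∀ x ∈ N, s • x ∈ F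

/-- A module `M` is `S`-noetherian if every submodule is `S`-finite. -/
def SNoeth {A : Type*} [CommRing A] (S : Submonoid A) (M : Type*) [AddCommGroup M]
    [Module A M] : Prop :=
  ∀ N : Submodule A M, SFin S N

/-!
Both implications go through the functoriality of `S`-finiteness: images of `S`-finite
submodules are `S`-finite, and so are preimages along injective maps. For the converse, given
`P ≤ M`, lift a finite generating set of an `S`-finite part `F₂` of `P/N` to a finitely
generated `G ≤ P`, and let `F₁ ≤ P ⊓ N` be finitely generated with `s₁ (P ⊓ N) ⊆ F₁`. If
`s₂ (P/N) ⊆ F₂`, then for `x ∈ P` there is `y ∈ G` with `s₂ x - y ∈ P ⊓ N`, so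
`s₁ s₂ x ∈ F₁ + G`.
-/

section

variable {A : Type*} [CommRing A] {S : Submonoid A}
  {M M' : Type*} [AddCommGroup M] [Module A M] [AddCommGroup M'] [Module A M']

theorem Submodule.exists_fg_le_map_eq {f : M →ₗ[A] M'} {P : Submodule A M}
    {F : Submodule A M'} (hF : F.FG) (hFP : F ≤ P.map f) :
    ∃ G : Submodule A M, G.FG ∧ G ≤ P ∧ G.map f = F := by
  obtain ⟨T, hT, rfl⟩ := Submodule.fg_def.mp hF
  have hTP : T ⊆ f '' P := Submodule.subset_span.trans hFP
  obtain ⟨t, htP, ht, rfl⟩ := Set.exists_subset_image_finite_and.mp ⟨T, hTP, hT, rfl⟩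
  exact ⟨Submodule.span A t, Submodule.fg_def.mpr ⟨t, ht, rfl⟩,
    Submodule.span_le.mpr htP, Submodule.map_span f t⟩

namespace SFin

theorem map (f : M →ₗ[A] M') {P : Submodule A M} (h : SFin S P) : SFin S (P.map f) := by
  obtain ⟨F, hF, hFP, s, hs, hsF⟩ := h
  refine ⟨F.map f, hF.map f, Submodule.map_mono hFP, s, hs, ?_⟩
  rintro _ ⟨x, hx, rfl⟩
  exact ⟨s • x, hsF x hx, map_smul f s x⟩

theorem of_map_injective {f : M →ₗ[A] M'} (hf : Function.Injective f) {P : Submodule A M}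
    (h : SFin S (P.map f)) : SFin S P := by
  obtain ⟨F, hF, hFP, s, hs, hsF⟩ := h
  have hF_range : F ≤ LinearMap.range f := hFP.trans LinearMap.map_le_range
  refine ⟨F.comap f, ?_, ?_, s, hs, fun x hx ↦ ?_⟩
  · refine Submodule.fg_of_fg_map_injective f hf ?_
    rwa [Submodule.map_comap_eq_self hF_range]
  · simpa only [Submodule.comap_map_eq_of_injective hf] using Submodule.comap_mono (f := f) hFP
  · simpa only [Submodule.mem_comap, map_smul] using hsF (f x) ⟨x, hx, rfl⟩

theorem of_ker_inf_of_map (f : M →ₗ[A] M') {P : Submodule A M}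
    (hker : SFin S (LinearMap.ker f ⊓ P)) (hmap : SFin S (P.map f)) : SFin S P := by
  obtain ⟨F₁, hF₁, hF₁P, s₁, hs₁, hs₁F₁⟩ := hker
  obtain ⟨F₂, hF₂, hF₂P, s₂, hs₂, hs₂F₂⟩ := hmap
  obtain ⟨G, hG, hGP, rfl⟩ := Submodule.exists_fg_le_map_eq hF₂ hF₂P
  refine ⟨F₁ ⊔ G, hF₁.sup hG, sup_le (hF₁P.trans inf_le_right) hGP,
    s₁ * s₂, S.mul_mem hs₁ hs₂, fun x hx ↦ ?_⟩
  obtain ⟨y, hyG, hy⟩ := hs₂F₂ (f x) ⟨x, hx, rfl⟩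
  have hdiff : s₂ • x - y ∈ LinearMap.ker f ⊓ P :=
    Submodule.mem_inf.mpr ⟨by rw [LinearMap.mem_ker, map_sub, map_smul, hy, sub_self],
      P.sub_mem (P.smul_mem s₂ hx) (hGP hyG)⟩
  have hsplit : (s₁ * s₂) • x = s₁ • (s₂ • x - y) + s₁ • y := by
    rw [smul_sub, mul_smul, sub_add_cancel]
  rw [hsplit]
  exact Submodule.add_mem_sup (hs₁F₁ _ hdiff) (G.smul_mem s₁ hyG)

end SFin

namespace SNoeth

theorem of_injective (f : M →ₗ[A] M') (hf : Function.Injective f) (h : SNoeth S M') :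
    SNoeth S M :=
  fun P ↦ SFin.of_map_injective hf (h (P.map f))

theorem of_surjective (f : M →ₗ[A] M') (hf : Function.Surjective f) (h : SNoeth S M) :
    SNoeth S M' := fun P ↦ by
  simpa only [Submodule.map_comap_eq_of_surjective hf] using (h (P.comap f)).map f

theorem of_submodule_of_quotient (N : Submodule A M) (hN : SNoeth S N)
    (hQ : SNoeth S (M ⧸ N)) : SNoeth S M := fun P ↦ by
  have hinf : SFin S (N ⊓ P) := by
    simpa only [Submodule.map_comap_subtype] using (hN (P.comap N.subtype)).map N.subtype
  exact SFin.of_ker_inf_of_map N.mkQ (by rwa [Submodule.ker_mkQ]) (hQ (P.map N.mkQ))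

end SNoeth

end

theorem stmt2 {A : Type*} [CommRing A] (S : Submonoid A) {M : Type*} [AddCommGroup M]
    [Module A M] (N : Submodule A M) :
    SNoeth S M ↔ SNoeth S N ∧ SNoeth S (M ⧸ N) :=
  ⟨fun h ↦ ⟨h.of_injective N.subtype N.injective_subtype, h.of_surjective N.mkQ N.mkQ_surjective⟩,
    fun ⟨hN, hQ⟩ ↦ SNoeth.of_submodule_of_quotient N hN hQ⟩
end

section
/- Let f : A → B be a surjective-on-ideals ring homomorphism (every ideal of B is of the form f(a)·B for some ideal a of A) and S ⊆ A a multiplicatively closed subset. If A is S-noetherian, then B is f(S)-noetherian. -/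
theorem SFin.ideal_map {A B : Type*} [CommRing A] [CommRing B] (f : A →+* B)
    {S : Submonoid A} {I : Ideal A} (hI : SFin S I) : SFin (S.map f) (I.map f) := by
  obtain ⟨F, hFG, hFI, s, hs, hsF⟩ := hI
  refine ⟨Ideal.map f F, Ideal.FG.map hFG f, Ideal.map_mono hFI, f s,
    Submonoid.mem_map_of_mem f hs, ?_⟩
  -- `(f s) · f(I)` is the image of `(s) · I ⊆ F`.
  have hspan : Ideal.span {f s} * I.map f ≤ Ideal.map f F := by
    rw [← Set.image_singleton, ← Ideal.map_span, ← Ideal.map_mul]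
    exact Ideal.map_mono (Ideal.span_singleton_mul_le_iff.mpr hsF)
  exact Ideal.span_singleton_mul_le_iff.mp hspan

theorem stmt4 {A B : Type*} [CommRing A] [CommRing B] (f : A →+* B)
    (hf : ∀ J : Ideal B, ∃ I : Ideal A, J = I.map f)
    (S : Submonoid A) (hA : SNoeth S A) : SNoeth (S.map f) B := by
  intro J
  obtain ⟨I, rfl⟩ := hf J
  exact (hA I).ideal_map f
end

section
/- Let A be a commutative ring, S ⊆ A multiplicatively closed, M an S-finite A-module, and N ⊆ M a submodule maximal among the submodules of M that are not S-finite. Then the ideal (N : M) = {a ∈ A : M·a ⊆ N} is a prime ideal of A. -/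
/-!
If `a, b ∉ (N : M)` but `ab ∈ (N : M)`, then both `N + aM` and `(N : a) = {x | a x ∈ N}` strictly
contain `N`, hence are `S`-finite by maximality. But `S`-finiteness of `N + aM` and `(N : a)`
forces that of `N`: for `x ∈ N`, write `s x = n + a m` with `n` from finitely many elements of `N`;
then `a m ∈ N`, so `t m` lies in a finitely generated submodule of `(N : a)`, and
`(ts) x = t n + a (t m)`.
-/

theorem Submodule.FG.exists_fg_le_of_le_sup {R M : Type*} [Semiring R] [AddCommMonoid M]
    [Module R M] {F N P : Submodule R M} (hF : F.FG) (hle : F ≤ N ⊔ P) :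
    ∃ F₁ F₂ : Submodule R M, F₁.FG ∧ F₂.FG ∧ F₁ ≤ N ∧ F₂ ≤ P ∧ F ≤ F₁ ⊔ F₂ := by
  obtain ⟨T, rfl⟩ := hF
  have hsplit : ∀ t ∈ T, ∃ y ∈ N, ∃ z ∈ P, y + z = t := fun t ht =>
    Submodule.mem_sup.mp (hle (Submodule.subset_span ht))
  choose! y hy z hz hyz using hsplit
  refine ⟨span R (y '' T), span R (z '' T), fg_span (T.finite_toSet.image y),
    fg_span (T.finite_toSet.image z), span_le.mpr ?_, span_le.mpr ?_, span_le.mpr ?_⟩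
  · rintro _ ⟨t, ht, rfl⟩; exact hy t ht
  · rintro _ ⟨t, ht, rfl⟩; exact hz t ht
  · intro t ht
    rw [← hyz t ht]
    exact add_mem (mem_sup_left (subset_span ⟨t, ht, rfl⟩))
      (mem_sup_right (subset_span ⟨t, ht, rfl⟩))

theorem SFin.of_sup_range_of_comap {A : Type*} [CommRing A] {S : Submonoid A}
    {M M' : Type*} [AddCommGroup M] [Module A M] [AddCommGroup M'] [Module A M']
    {N : Submodule A M} (φ : M' →ₗ[A] M) (hsup : SFin S (N ⊔ LinearMap.range φ))
    (hcomap : SFin S (N.comap φ)) : SFin S N := by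
  obtain ⟨F, hFfg, hFle, s, hs, hsF⟩ := hsup
  obtain ⟨G, hGfg, hGle, t, ht, htG⟩ := hcomap
  obtain ⟨F₁, F₂, hF₁fg, -, hF₁N, hF₂φ, hFF⟩ := hFfg.exists_fg_le_of_le_sup hFle
  refine ⟨F₁ ⊔ G.map φ, hF₁fg.sup (hGfg.map φ),
    sup_le hF₁N (Submodule.map_le_iff_le_comap.mpr hGle), t * s, S.mul_mem ht hs, ?_⟩
  intro x hx
  obtain ⟨n, hn, _, hy, hsx⟩ := Submodule.mem_sup.mp (hFF (hsF x (Submodule.mem_sup_left hx)))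
  obtain ⟨m, rfl⟩ := hF₂φ hy
  have hm : m ∈ N.comap φ := by
    rw [Submodule.mem_comap, eq_sub_of_add_eq' hsx]
    exact sub_mem (N.smul_mem s hx) (hF₁N hn)
  have hts : (t * s) • x = t • n + φ (t • m) := by
    rw [mul_smul, ← hsx, smul_add, map_smul]
  rw [hts]
  exact add_mem (Submodule.mem_sup_left (F₁.smul_mem t hn))
    (Submodule.mem_sup_right (Submodule.mem_map_of_mem (htG m hm)))

theorem stmt6 {A : Type*} [CommRing A] (S : Submonoid A) {M : Type*} [AddCommGroup M]
    [Module A M] (hM : SFin S (⊤ : Submodule A M)) (N : Submodule A M)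
    (hN : ¬ SFin S N) (hmax : ∀ N' : Submodule A M, N < N' → SFin S N') :
    (N.colon ⊤).IsPrime := by
  refine ⟨fun htop => hN ?_, fun {a b} hab => ?_⟩
  · have hNtop : N = ⊤ :=
      eq_top_iff.mpr fun z _ => (Submodule.colon_eq_top_iff_subset _).mp htop (Set.mem_univ z)
    rwa [hNtop]
  by_contra! ⟨ha, hb⟩
  obtain ⟨x, -, hax⟩ := not_forall₂.mp (mt Submodule.mem_colon.mpr ha)
  obtain ⟨y, -, hby⟩ := not_forall₂.mp (mt Submodule.mem_colon.mpr hb)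
  have hsup : N < N ⊔ LinearMap.range (a • LinearMap.id) :=
    lt_of_le_of_ne le_sup_left fun h =>
      hax (h ▸ Submodule.mem_sup_right ⟨x, rfl⟩)
  have hcomap : N < N.comap (a • LinearMap.id) :=
    lt_of_le_of_ne (fun z hz => N.smul_mem a hz) fun h => hby <| h ▸ by
      simpa [smul_smul, mul_comm] using Submodule.mem_colon.mp hab y trivial
  exact hN ((hmax _ hsup).of_sup_range_of_comap _ (hmax _ hcomap))
end

section
/- (Relative Cohen theorem) Let A be a commutative ring and S ⊆ A a multiplicatively closed subset. Then A is S-noetherian if and only if every prime ideal p of A with p ∩ S = ∅ is S-finite. -/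
/-!
Cohen's argument, relative to `S`. By Zorn's lemma (a finitely generated submodule is a compact
element of the lattice of submodules), if some ideal is not `S`-finite there is an ideal `P`
maximal among those that are not. Such a `P` meets no element of `S`, and it is prime: if
`a, b ∉ P` but `a * b ∈ P`, then `P + (a)` and `(P : a) ∋ b` strictly contain `P`, so both are
`S`-finite, and from `s • (P + (a)) ⊆ F₀ + (a)` with `F₀ ⊆ P` finitely generated and
`t • (P : a) ⊆ K` one gets `(s * t) • P ⊆ F₀ + a K`, so `P` would be `S`-finite.
-/

namespace Submodule

variable {R M : Type*} [Semiring R] [AddCommMonoid M] [Module R M]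

theorem FG.exists_fg_le_sup_of_le_sup {F : Submodule R M} (hF : F.FG) {N N' : Submodule R M}
    (hle : F ≤ N ⊔ N') : ∃ F₀ : Submodule R M, F₀.FG ∧ F₀ ≤ N ∧ F ≤ F₀ ⊔ N' := by
  induction F, hF using Submodule.fg_induction with
  | singleton x =>
    obtain ⟨y, hy, z, hz, rfl⟩ := mem_sup.mp (hle (mem_span_singleton_self x))
    refine ⟨R ∙ y, fg_span_singleton y, (span_singleton_le_iff_mem y N).mpr hy, ?_⟩
    exact (span_singleton_le_iff_mem _ _).mpr
      (add_mem_sup (mem_span_singleton_self y) hz)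
  | sup F₁ F₂ _ _ ih₁ ih₂ =>
    obtain ⟨G₁, hG₁, hG₁N, hF₁⟩ := ih₁ (le_sup_left.trans hle)
    obtain ⟨G₂, hG₂, hG₂N, hF₂⟩ := ih₂ (le_sup_right.trans hle)
    refine ⟨G₁ ⊔ G₂, hG₁.sup hG₂, sup_le hG₁N hG₂N, sup_le ?_ ?_⟩
    · exact hF₁.trans (sup_le_sup_right le_sup_left N')
    · exact hF₂.trans (sup_le_sup_right le_sup_right N')

end Submodule

section SFin

variable {A : Type*} [CommRing A] (S : Submonoid A)

theorem SFin.of_mem_submonoid {I : Ideal A} {s : A} (hs : s ∈ S) (hsI : s ∈ I) : SFin S I :=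
  ⟨Ideal.span {s}, ⟨{s}, by simp⟩, (Ideal.span_singleton_le_iff_mem I).mpr hsI, s, hs,
    fun x _ => Ideal.mem_span_singleton'.mpr ⟨x, mul_comm x s⟩⟩

theorem SFin.exists_mem_of_isChain {M : Type*} [AddCommGroup M] [Module A M]
    {c : Set (Submodule A M)} (hc : IsChain (· ≤ ·) c) (hne : c.Nonempty)
    (h : SFin S (sSup c)) : ∃ N ∈ c, SFin S N := by
  obtain ⟨F, hF, hFle, s, hs, hsF⟩ := h
  have hcompact := (Submodule.fg_iff_compact F).mp hF
  rw [CompleteLattice.isCompactElement_iff_le_of_directed_sSup_le] at hcompact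
  obtain ⟨N, hNc, hFN⟩ := hcompact c hne hc.directedOn hFle
  exact ⟨N, hNc, F, hF, hFN, s, hs, fun x hx => hsF x (le_sSup hNc hx)⟩

theorem exists_maximal_not_sFin {M : Type*} [AddCommGroup M] [Module A M]
    {N : Submodule A M} (hN : ¬SFin S N) :
    ∃ P, N ≤ P ∧ Maximal (fun P : Submodule A M => ¬SFin S P) P := by
  refine zorn_le_nonempty₀ _ (fun c hcS hc y hy => ⟨sSup c, ?_, fun z hz => le_sSup hz⟩) N hN
  intro hsup
  obtain ⟨P, hPc, hP⟩ := SFin.exists_mem_of_isChain S hc ⟨y, hy⟩ hsup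
  exact hcS hPc hP

theorem SFin.of_sup_span_singleton_of_colon {I : Ideal A} {a : A}
    (hsup : SFin S (I ⊔ Ideal.span {a})) (hcolon : SFin S (I.colon (Ideal.span {a}))) :
    SFin S I := by
  obtain ⟨F, hF, hFle, s, hs, hsF⟩ := hsup
  obtain ⟨K, hK, hKle, t, ht, htK⟩ := hcolon
  obtain ⟨F₀, hF₀, hF₀I, hFF₀⟩ := hF.exists_fg_le_sup_of_le_sup hFle
  have haK : Ideal.span {a} * K ≤ I := by
    rw [Ideal.span_singleton_mul_le_iff]
    exact fun k hk => mul_comm a k ▸ Ideal.mem_colon_span_singleton.mp (hKle hk)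
  refine ⟨F₀ ⊔ Ideal.span {a} * K, hF₀.sup ((Submodule.fg_span_singleton a).mul hK),
    sup_le hF₀I haK, s * t, S.mul_mem hs ht, fun x hx => ?_⟩
  obtain ⟨f, hf, _, hw, hfw⟩ := Submodule.mem_sup.mp (hFF₀ (hsF x (Ideal.mem_sup_left hx)))
  obtain ⟨y, rfl⟩ := Ideal.mem_span_singleton'.mp hw
  have hy : y ∈ I.colon (Ideal.span {a}) := by
    refine Ideal.mem_colon_span_singleton.mpr ?_
    have hya : y * a = s • x - f := by rw [← hfw]; ring
    exact hya ▸ I.sub_mem (I.smul_mem s hx) (hF₀I hf)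
  have hst : (s * t) • x = t * f + a * (t * y) := by
    rw [mul_comm s t, mul_smul, ← hfw, smul_eq_mul]
    ring
  rw [hst]
  exact Submodule.add_mem_sup (F₀.smul_mem t hf)
    (Ideal.mul_mem_mul (Ideal.mem_span_singleton_self a) (htK y hy))

theorem isPrime_of_maximal_not_sFin {P : Ideal A}
    (hP : Maximal (fun I : Ideal A => ¬SFin S I) P) : P.IsPrime := by
  refine ⟨fun htop => hP.prop (htop ▸ SFin.of_mem_submonoid S S.one_mem Submodule.mem_top),
    fun {a b} hab => or_iff_not_imp_left.mpr fun ha => ?_⟩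
  by_contra hb
  have hsup : SFin S (P ⊔ Ideal.span {a}) := not_not.mp <| hP.not_prop_of_gt <|
    left_lt_sup.mpr fun h => ha (h (Ideal.mem_span_singleton_self a))
  have hcolon : SFin S (P.colon (Ideal.span {a})) := not_not.mp <| hP.not_prop_of_gt <|
    SetLike.lt_iff_le_and_exists.mpr
      ⟨fun x hx => Ideal.mem_colon_span_singleton.mpr (P.mul_mem_right a hx),
        b, Ideal.mem_colon_span_singleton.mpr (mul_comm a b ▸ hab), hb⟩
  exact hP.prop (SFin.of_sup_span_singleton_of_colon S hsup hcolon)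

end SFin

theorem stmt8 {A : Type*} [CommRing A] (S : Submonoid A) :
    SNoeth S A ↔ ∀ p : Ideal A, p.IsPrime → (∀ s ∈ S, s ∉ p) → SFin S p := by
  refine ⟨fun h p _ _ => h p, fun H => ?_⟩
  by_contra hA
  obtain ⟨N, hN⟩ := not_forall.mp hA
  obtain ⟨P, -, hP⟩ := exists_maximal_not_sFin S hN
  exact hP.prop <| H P (isPrime_of_maximal_not_sFin S hP) fun s hs hsP =>
    hP.prop (SFin.of_mem_submonoid S hs hsP)
end

section
/- Let A be a commutative ring, S ⊆ A multiplicatively closed, and M an A-module. Then M is S-noetherian if and only if every nonempty family of submodules of M has an S-maximal element, i.e., an element N of the family for which there exists s ∈ S such that for every H in the family with N ⊆ H one has H·s ⊆ N. -/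
namespace Submodule

variable {A : Type*} [CommRing A] (S : Submonoid A) {M : Type*} [AddCommGroup M] [Module A M]

def saturation (N : Submodule A M) : Submodule A M where
  carrier := {x | ∃ s ∈ S, s • x ∈ N}
  add_mem' := by
    rintro x y ⟨s, hs, hsx⟩ ⟨t, ht, hty⟩
    refine ⟨s * t, S.mul_mem hs ht, ?_⟩
    rw [smul_add, mul_comm, mul_smul, mul_comm, mul_smul]
    exact N.add_mem (N.smul_mem t hsx) (N.smul_mem s hty)
  zero_mem' := ⟨1, S.one_mem, by simp⟩
  smul_mem' := by
    rintro a x ⟨s, hs, hsx⟩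
    exact ⟨s, hs, by rw [smul_comm]; exact N.smul_mem a hsx⟩

variable {S}

theorem exists_smul_mem_of_fg_le_saturation {N F : Submodule A M} (hF : F.FG)
    (hFN : F ≤ N.saturation S) : ∃ s ∈ S, ∀ x ∈ F, s • x ∈ N := by
  induction F, hF using fg_induction with
  | singleton x =>
    obtain ⟨s, hs, hsx⟩ := hFN (mem_span_singleton_self x)
    refine ⟨s, hs, fun y hy => ?_⟩
    obtain ⟨a, rfl⟩ := mem_span_singleton.mp hy
    rw [smul_comm]
    exact N.smul_mem a hsx
  | sup F₁ F₂ _ _ ih₁ ih₂ =>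
    obtain ⟨s₁, hs₁, h₁⟩ := ih₁ (le_sup_left.trans hFN)
    obtain ⟨s₂, hs₂, h₂⟩ := ih₂ (le_sup_right.trans hFN)
    refine ⟨s₁ * s₂, S.mul_mem hs₁ hs₂, fun y hy => ?_⟩
    obtain ⟨y₁, hy₁, y₂, hy₂, rfl⟩ := mem_sup.mp hy
    rw [smul_add, mul_comm, mul_smul, mul_comm, mul_smul]
    exact N.add_mem (N.smul_mem s₂ (h₁ y₁ hy₁)) (N.smul_mem s₁ (h₂ y₂ hy₂))

theorem FG.exists_le_of_le_iSup_chain {F : Submodule A M} (hF : F.FG) (N : ℕ →o Submodule A M)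
    (hFN : F ≤ ⨆ n, N n) : ∃ j, F ≤ N j := by
  have hcompact := (fg_iff_compact F).mp hF
  rw [CompleteLattice.isCompactElement_iff_le_of_directed_sSup_le] at hcompact
  obtain ⟨-, ⟨j, rfl⟩, hj⟩ := hcompact (Set.range N) (Set.range_nonempty N)
    (directedOn_range.mpr N.monotone.directed_le) (by rwa [sSup_range])
  exact ⟨j, hj⟩

end Submodule

open Submodule

namespace SNoeth

variable {A : Type*} [CommRing A] {S : Submonoid A} {M : Type*} [AddCommGroup M] [Module A M]

theorem exists_smul_mem_of_mem_saturation (h : SNoeth S M) (N : Submodule A M) :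
    ∃ s ∈ S, ∀ x ∈ N.saturation S, s • x ∈ N := by
  obtain ⟨F, hF, hFN, u, hu, huF⟩ := h (N.saturation S)
  obtain ⟨c, hc, hcF⟩ := exists_smul_mem_of_fg_le_saturation hF hFN
  exact ⟨c * u, S.mul_mem hc hu, fun x hx => by rw [mul_smul]; exact hcF _ (huF x hx)⟩

theorem exists_iSup_le_saturation (h : SNoeth S M) (N : ℕ →o Submodule A M) :
    ∃ j, ⨆ n, N n ≤ (N j).saturation S := by
  obtain ⟨F, hF, hFN, t, ht, htF⟩ := h (⨆ n, N n)
  obtain ⟨j, hj⟩ := hF.exists_le_of_le_iSup_chain N hFN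
  exact ⟨j, fun x hx => ⟨t, ht, hj (htF x hx)⟩⟩

theorem wellFounded_not_le_saturation (h : SNoeth S M) :
    WellFounded fun H N : Submodule A M => N ≤ H ∧ ¬H ≤ N.saturation S := by
  refine wellFounded_iff_isEmpty_descending_chain.mpr ⟨fun ⟨N, hN⟩ => ?_⟩
  obtain ⟨j, hj⟩ := h.exists_iSup_le_saturation ⟨N, monotone_nat_of_le_succ fun n => (hN n).1⟩
  exact (hN j).2 ((le_iSup N (j + 1)).trans hj)

theorem exists_sMaximal (h : SNoeth S M) (F : Set (Submodule A M)) (hF : F.Nonempty) :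
    ∃ N ∈ F, ∃ s ∈ S, ∀ H ∈ F, N ≤ H → ∀ x ∈ H, s • x ∈ N := by
  obtain ⟨N, hN, hmin⟩ := h.wellFounded_not_le_saturation.has_min F hF
  obtain ⟨s, hs, hsat⟩ := h.exists_smul_mem_of_mem_saturation N
  exact ⟨N, hN, s, hs, fun H hH hNH x hx => hsat x (not_and_not_right.mp (hmin H hH) hNH hx)⟩

theorem of_exists_sMaximal
    (h : ∀ F : Set (Submodule A M), F.Nonempty →
      ∃ N ∈ F, ∃ s ∈ S, ∀ H ∈ F, N ≤ H → ∀ x ∈ H, s • x ∈ N) :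
    SNoeth S M := by
  intro N
  obtain ⟨F, ⟨hF, hFN⟩, s, hs, hmax⟩ := h {F | F.FG ∧ F ≤ N} ⟨⊥, fg_bot, bot_le⟩
  refine ⟨F, hF, hFN, s, hs, fun x hx => hmax (F ⊔ A ∙ x) ?_ le_sup_left x ?_⟩
  · exact ⟨hF.sup (fg_span_singleton x), sup_le hFN ((span_singleton_le_iff_mem x N).mpr hx)⟩
  · exact mem_sup_right (mem_span_singleton_self x)

end SNoeth

theorem stmt11 {A : Type*} [CommRing A] (S : Submonoid A) {M : Type*} [AddCommGroup M]
    [Module A M] :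
    SNoeth S M ↔
      ∀ F : Set (Submodule A M), F.Nonempty →
        ∃ N ∈ F, ∃ s ∈ S, ∀ H ∈ F, N ≤ H → ∀ x ∈ H, s • x ∈ N :=
  ⟨SNoeth.exists_sMaximal, SNoeth.of_exists_sMaximal⟩
end

section
/- Let A ⊆ B be a faithfully flat extension of commutative rings in the sense that aB ∩ A = a for every ideal a ⊆ A, and let S ⊆ A be multiplicatively closed. If B is S-noetherian (with respect to the image of S in B), then A is S-noetherian. -/
theorem Ideal.exists_fg_le_map_of_fg_le_map {A B : Type*} [CommRing A] [CommRing B]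
    (f : A →+* B) {N : Ideal A} {F : Ideal B} (hF : F.FG) (hFN : F ≤ N.map f) :
    ∃ I ≤ N, I.FG ∧ F ≤ I.map f := by
  classical
  have hFN' : F ≤ ⨆ a : N, Ideal.span {f a} := by
    refine hFN.trans (Ideal.map_le_iff_le_comap.mpr fun a ha => ?_)
    exact Ideal.mem_comap.mpr <| Ideal.mem_iSup_of_mem ⟨a, ha⟩ (Ideal.mem_span_singleton_self _)
  obtain ⟨t, ht⟩ :=
    CompleteLattice.IsCompactElement.exists_finset_of_le_iSup _
      ((Submodule.fg_iff_compact F).mp hF) _ hFN'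
  refine ⟨Ideal.span (t.image Subtype.val), Ideal.span_le.mpr ?_, ⟨_, rfl⟩, ht.trans ?_⟩
  · intro x hx
    obtain ⟨a, -, rfl⟩ := Finset.mem_image.mp hx
    exact a.2
  · refine iSup₂_le fun a ha => Ideal.span_le.mpr <| Set.singleton_subset_iff.mpr ?_
    exact Ideal.mem_map_of_mem f <| Ideal.subset_span <| Finset.mem_image_of_mem _ ha

theorem SFin.of_ideal_map {A B : Type*} [CommRing A] [CommRing B] {f : A →+* B}
    (hf : ∀ I : Ideal A, (I.map f).comap f = I) {S : Submonoid A} {N : Ideal A}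
    (h : SFin (S.map f) (N.map f)) : SFin S N := by
  obtain ⟨F, hF, hFN, _, ⟨s, hs, rfl⟩, hsF⟩ := h
  obtain ⟨I, hIN, hI, hFI⟩ := Ideal.exists_fg_le_map_of_fg_le_map f hF hFN
  refine ⟨I, hI, hIN, s, hs, fun x hx => ?_⟩
  rw [← hf I, Ideal.mem_comap, smul_eq_mul, map_mul]
  exact hFI <| hsF _ <| Ideal.mem_map_of_mem f hx

theorem stmt14_general {A B : Type*} [CommRing A] [CommRing B] [Algebra A B]
    (S : Submonoid A)
    (hff : ∀ a : Ideal A, (a.map (algebraMap A B)).comap (algebraMap A B) = a)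
    (hB : SNoeth (S.map (algebraMap A B)) B) : SNoeth S A :=
  fun _ => (hB _).of_ideal_map hff

theorem stmt14 {A B : Type*} [CommRing A] [CommRing B] [Algebra A B]
    (hinj : Function.Injective (algebraMap A B)) (S : Submonoid A)
    (hff : ∀ a : Ideal A, (a.map (algebraMap A B)).comap (algebraMap A B) = a)
    (hB : SNoeth (S.map (algebraMap A B)) B) : SNoeth S A :=
  stmt14_general S hff hB
end

section
/- (Relative Hilbert basis theorem for power series) Let A be a commutative ring and S ⊆ A an anti-archimedean multiplicatively closed subset. If A is S-noetherian, then the formal power series ring A⟦X⟧ is S-noetherian. -/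
/-!
For an ideal `N` of `A⟦X⟧`, let `Lₙ = coeffIdeal N n` be the ideal of `n`-th coefficients of the
elements of `N` divisible by `Xⁿ`. The `Lₙ` increase with `n`, so `S`-finiteness of their union `L`
yields a level `m`, finitely many `gᵢ ∈ N` divisible by `Xᵐ` and `s ∈ S` with
`s L ⊆ (coeffₘ gᵢ)ᵢ`. An element of `N` divisible by `Xᵐ` is then reduced coefficient by
coefficient against the `Xᵏ gᵢ`, each step costing a factor `s`. To assemble the partial quotients
into power series one needs elements `wₙ ∈ A` with `wₙ = s wₙ₊₁` and `w₀ ∈ S`: take `wₙ = u t / sⁿ`,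
where `t ∈ ⋂ sⁿA` (anti-archimedean hypothesis) and `u ∈ S` kills all `s`-power torsion
(`S`-finiteness of the union of the annihilators of the `sⁿ`), so that the ambiguity of the
quotients `t / sⁿ` disappears. The finitely many coefficients below `m` are handled by the
`S`-finiteness of `L₀, …, Lₘ₋₁`.
-/

theorem SFin.exists_fg_le_of_monotone {A M : Type*} [CommRing A] [AddCommGroup M] [Module A M]
    {S : Submonoid A} {I : ℕ → Submodule A M} (hI : Monotone I) (h : SFin S (⨆ n, I n)) :
    ∃ m, ∃ F : Submodule A M, F.FG ∧ F ≤ I m ∧ ∃ s ∈ S, ∀ x ∈ ⨆ n, I n, s • x ∈ F := by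
  obtain ⟨F, hF, hFI, s, hs, hsF⟩ := h
  obtain ⟨_, ⟨m, rfl⟩, hFm⟩ :=
    (CompleteLattice.isCompactElement_iff_le_of_directed_sSup_le (α := Submodule A M) F).1
      ((Submodule.fg_iff_compact F).1 hF) _ (Set.range_nonempty I)
      hI.directed_le.directedOn_range (by rwa [sSup_range])
  exact ⟨m, F, hF, hFm, s, hs, hsF⟩

theorem SNoeth.exists_mul_eq_zero_of_pow_mul_eq_zero {A : Type*} [CommRing A] {S : Submonoid A}
    (hA : SNoeth S A) {s : A} (hs : s ∈ S) :
    ∃ u ∈ S, ∀ (n : ℕ) (x : A), s ^ n * x = 0 → u * x = 0 := by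
  let I : ℕ → Ideal A := fun n => LinearMap.ker (LinearMap.mulLeft A (s ^ n))
  have hI : Monotone I := fun n n' h x hx => by
    simpa [I] using pow_mul_eq_zero_of_le h (by simpa [I] using hx)
  obtain ⟨M, F, -, hFM, s', hs', hs'F⟩ := (hA _).exists_fg_le_of_monotone hI
  refine ⟨s' * s ^ M, mul_mem hs' (pow_mem hs M), fun n x hx => ?_⟩
  have := hFM (hs'F x (Submodule.mem_iSup_of_mem n (by simpa [I] using hx)))
  simp only [I, LinearMap.mem_ker, LinearMap.mulLeft_apply, smul_eq_mul] at this
  linear_combination this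

theorem exists_seq_eq_mul_succ {A : Type*} [CommRing A] {s t u : A}
    (hu : ∀ (n : ℕ) (x : A), s ^ n * x = 0 → u * x = 0) (ht : ∀ n : ℕ, s ^ n ∣ t) :
    ∃ w : ℕ → A, w 0 = u * t ∧ ∀ n, w n = s * w (n + 1) := by
  choose v hv using ht
  refine ⟨fun n => u * v n, by simp [hv 0], fun n => ?_⟩
  have := hu n (v n - s * v (n + 1)) (by linear_combination hv (n + 1) - hv n)
  linear_combination this

namespace PowerSeries

variable {A : Type*} [CommRing A]

theorem X_pow_succ_dvd_iff {f : A⟦X⟧} {n : ℕ} : X ^ (n + 1) ∣ f ↔ X ^ n ∣ f ∧ coeff n f = 0 := by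
  simp only [X_pow_dvd_iff, Nat.lt_succ_iff_lt_or_eq, or_imp, forall_and, forall_eq]

theorem X_pow_dvd_sub_trunc (f : A⟦X⟧) (n : ℕ) : X ^ n ∣ f - (trunc n f : A⟦X⟧) :=
  X_pow_dvd_iff.2 fun _ hm => by rw [map_sub, coeff_coe_trunc_of_lt hm, sub_self]

theorem eq_zero_of_forall_X_pow_dvd {f : A⟦X⟧} (h : ∀ n, X ^ n ∣ f) : f = 0 :=
  ext fun n => X_pow_dvd_iff.1 (h (n + 1)) n n.lt_succ_self

noncomputable def coeffIdeal (N : Ideal A⟦X⟧) (n : ℕ) : Ideal A :=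
  ((N ⊓ Ideal.span {X ^ n}).restrictScalars A).map (coeff n)

theorem mem_coeffIdeal {N : Ideal A⟦X⟧} {n : ℕ} {a : A} :
    a ∈ coeffIdeal N n ↔ ∃ f ∈ N, X ^ n ∣ f ∧ coeff n f = a := by
  simp [coeffIdeal, Ideal.mem_span_singleton, and_assoc]

theorem coeffIdeal_mono (N : Ideal A⟦X⟧) : Monotone (coeffIdeal N) := by
  intro n n' h a ha
  obtain ⟨k, rfl⟩ := Nat.exists_eq_add_of_le h
  obtain ⟨f, hfN, hfX, rfl⟩ := mem_coeffIdeal.1 ha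
  exact mem_coeffIdeal.2 ⟨X ^ k * f, N.mul_mem_left _ hfN,
    by rw [add_comm, pow_add]; exact mul_dvd_mul_left _ hfX, coeff_X_pow_mul f k n⟩

variable {ι : Type*} [Fintype ι] {N : Ideal A⟦X⟧} {g : ι → A⟦X⟧}

theorem exists_X_pow_succ_dvd_sub_sum {n : ℕ} {s : A} {f : A⟦X⟧}
    (hgN : ∀ i, g i ∈ N) (hgX : ∀ i, X ^ n ∣ g i) (hfN : f ∈ N) (hfX : X ^ n ∣ f)
    (hs : s * coeff n f ∈ Ideal.span (Set.range fun i => coeff n (g i))) :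
    ∃ c : ι → A, C s * f - ∑ i, C (c i) * g i ∈ N ∧
      X ^ (n + 1) ∣ C s * f - ∑ i, C (c i) * g i := by
  obtain ⟨c, hc⟩ := Ideal.mem_span_range_iff_exists_fun.1 hs
  refine ⟨c, sub_mem (N.mul_mem_left _ hfN) (sum_mem fun i _ => N.mul_mem_left _ (hgN i)),
    X_pow_succ_dvd_iff.2 ⟨?_, ?_⟩⟩
  · exact dvd_sub (dvd_mul_of_dvd_right hfX _)
      (Finset.dvd_sum fun i _ => dvd_mul_of_dvd_right (hgX i) _)
  · simp [map_sum, hc]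

theorem C_mul_eq_add_sum_trunc_mul {s : A} {w : ℕ → A} (hw : ∀ n, w n = s * w (n + 1))
    {r : ℕ → A⟦X⟧} {c : ℕ → ι → A}
    (hr : ∀ k, C s * r k = r (k + 1) + X ^ k * ∑ i, C (c k i) * g i) (d : ℕ) :
    C (w 0) * r 0 =
      C (w d) * r d + ∑ i, (trunc d (mk fun n => w (n + 1) * c n i) : A⟦X⟧) * g i := by
  induction d with
  | zero => simp
  | succ d ih =>
    rw [ih, hw d, map_mul, mul_assoc, mul_left_comm (C s), hr d]
    simp only [trunc_succ, coeff_mk, ← Polynomial.C_mul_X_pow_eq_monomial, Polynomial.coe_add,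
      Polynomial.coe_mul, Polynomial.coe_C, Polynomial.coe_pow, Polynomial.coe_X, map_mul, add_mul,
      Finset.sum_add_distrib, mul_add, Finset.mul_sum]
    rw [add_assoc, add_comm (∑ i, C (w (d + 1)) * _)]
    congr 2
    exact Finset.sum_congr rfl fun i _ => by ring

section

variable {m : ℕ} {s : A} (hgN : ∀ i, g i ∈ N) (hgX : ∀ i, X ^ m ∣ g i)
  (hlead : ∀ k, ∀ f ∈ N, X ^ (m + k) ∣ f →
    s * coeff (m + k) f ∈ Ideal.span (Set.range fun i => coeff m (g i)))
include hgN hgX hlead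

theorem exists_reduction_seq {f : A⟦X⟧} (hfN : f ∈ N) (hfX : X ^ m ∣ f) :
    ∃ (r : ℕ → A⟦X⟧) (c : ℕ → ι → A), r 0 = f ∧
      ∀ k, X ^ (m + k) ∣ r k ∧ C s * r k = r (k + 1) + X ^ k * ∑ i, C (c k i) * g i := by
  have step : ∀ k, ∀ p ∈ N, X ^ (m + k) ∣ p → ∃ c : ι → A,
      C s * p - ∑ i, C (c i) * (X ^ k * g i) ∈ N ∧
        X ^ (m + k + 1) ∣ C s * p - ∑ i, C (c i) * (X ^ k * g i) := fun k p hpN hpX =>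
    exists_X_pow_succ_dvd_sub_sum (fun i => N.mul_mem_left _ (hgN i))
      (fun i => by rw [pow_add, mul_comm]; exact mul_dvd_mul_left _ (hgX i)) hpN hpX
      (by simpa only [coeff_X_pow_mul] using hlead k p hpN hpX)
  choose! c hcN hcX using step
  let r : ℕ → A⟦X⟧ := fun k =>
    Nat.rec f (fun k p => C s * p - ∑ i, C (c k p i) * (X ^ k * g i)) k
  have hr : ∀ k, r k ∈ N ∧ X ^ (m + k) ∣ r k := fun k => by
    induction k with
    | zero => exact ⟨hfN, hfX⟩
    | succ k ih => exact ⟨hcN k _ ih.1 ih.2, hcX k _ ih.1 ih.2⟩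
  refine ⟨r, fun k => c k (r k), rfl, fun k => ⟨(hr k).2, ?_⟩⟩
  change C s * r k = (C s * r k - ∑ i, C (c k (r k) i) * (X ^ k * g i)) + _
  rw [Finset.mul_sum]
  simp only [mul_left_comm (X ^ k)]
  ring

theorem C_mul_mem_span_range {w : ℕ → A} (hw : ∀ n, w n = s * w (n + 1)) {f : A⟦X⟧}
    (hfN : f ∈ N) (hfX : X ^ m ∣ f) : C (w 0) * f ∈ Ideal.span (Set.range g) := by
  obtain ⟨r, c, rfl, hr⟩ := exists_reduction_seq hgN hgX hlead hfN hfX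
  set h : ι → A⟦X⟧ := fun i => mk fun n => w (n + 1) * c n i
  have hquot : C (w 0) * r 0 = ∑ i, h i * g i := by
    rw [← sub_eq_zero]
    refine eq_zero_of_forall_X_pow_dvd fun n => (pow_dvd_pow X (n.le_add_left m)).trans ?_
    have hsplit : C (w 0) * r 0 - ∑ i, h i * g i =
        C (w n) * r n - ∑ i, (h i - trunc n (h i)) * g i := by
      rw [C_mul_eq_add_sum_trunc_mul hw (fun k => (hr k).2) n]
      simp only [sub_mul, Finset.sum_sub_distrib]
      ring
    rw [hsplit]
    refine dvd_sub (dvd_mul_of_dvd_right (hr n).1 _) (Finset.dvd_sum fun i _ => ?_)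
    rw [add_comm, pow_add]
    exact mul_dvd_mul (X_pow_dvd_sub_trunc _ _) (hgX i)
  rw [hquot]
  exact Ideal.mem_span_range_iff_exists_fun.2 ⟨h, rfl⟩

end

section

variable {S : Submonoid A} (hA : SNoeth S A) (N)
include hA

theorem exists_fg_raise_order_succ (n : ℕ) :
    ∃ J : Ideal A⟦X⟧, J.FG ∧ J ≤ N ∧ ∃ s ∈ S,
      ∀ f ∈ N, X ^ n ∣ f → ∃ f' ∈ N, X ^ (n + 1) ∣ f' ∧ C s * f - f' ∈ J := by
  obtain ⟨F, hF, hFL, s, hs, hsF⟩ := hA (coeffIdeal N n)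
  obtain ⟨k, a, rfl⟩ := Submodule.fg_iff_exists_fin_generating_family.1 hF
  choose g hgN hgX hga using fun i => mem_coeffIdeal.1 (hFL (Submodule.subset_span ⟨i, rfl⟩))
  refine ⟨Ideal.span (Set.range g), Submodule.fg_span (Set.finite_range g),
    Ideal.span_le.2 (Set.range_subset_iff.2 hgN), s, hs, fun f hfN hfX => ?_⟩
  obtain ⟨c, hcN, hcX⟩ := exists_X_pow_succ_dvd_sub_sum hgN hgX hfN hfX
    (by simpa [hga] using hsF _ (mem_coeffIdeal.2 ⟨f, hfN, hfX, rfl⟩))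
  refine ⟨_, hcN, hcX, ?_⟩
  rw [sub_sub_cancel]
  exact sum_mem fun i _ => Ideal.mul_mem_left _ _ (Ideal.subset_span ⟨i, rfl⟩)

theorem exists_fg_raise_order (m : ℕ) :
    ∃ J : Ideal A⟦X⟧, J.FG ∧ J ≤ N ∧ ∃ s ∈ S,
      ∀ f ∈ N, ∃ f' ∈ N, X ^ m ∣ f' ∧ C s * f - f' ∈ J := by
  induction m with
  | zero => exact ⟨⊥, Submodule.fg_bot, bot_le, 1, one_mem S, fun f hf => ⟨f, hf, by simp, by simp⟩⟩
  | succ m ih =>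
    obtain ⟨J, hJ, hJN, s, hs, hred⟩ := ih
    obtain ⟨J', hJ', hJ'N, s', hs', hstep⟩ := exists_fg_raise_order_succ N hA m
    refine ⟨J ⊔ J', Submodule.FG.sup hJ hJ', sup_le hJN hJ'N, s' * s, mul_mem hs' hs,
      fun f hf => ?_⟩
    obtain ⟨f₁, hf₁N, hf₁X, hff₁⟩ := hred f hf
    obtain ⟨f₂, hf₂N, hf₂X, hf₁f₂⟩ := hstep f₁ hf₁N hf₁X
    refine ⟨f₂, hf₂N, hf₂X, ?_⟩
    have : C (s' * s) * f - f₂ = C s' * (C s * f - f₁) + (C s' * f₁ - f₂) := by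
      rw [map_mul]; ring
    rw [this]
    exact add_mem (Submodule.mem_sup_left (J.mul_mem_left _ hff₁)) (Submodule.mem_sup_right hf₁f₂)

theorem exists_fg_C_mul_mem_of_X_pow_dvd (hanti : ∀ s ∈ S, ∃ t ∈ S, ∀ n : ℕ, s ^ n ∣ t) :
    ∃ m, ∃ J : Ideal A⟦X⟧, J.FG ∧ J ≤ N ∧ ∃ s ∈ S, ∀ f ∈ N, X ^ m ∣ f → C s * f ∈ J := by
  obtain ⟨m, F, hF, hFm, s, hs, hsF⟩ := (hA _).exists_fg_le_of_monotone (coeffIdeal_mono N)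
  obtain ⟨k, a, rfl⟩ := Submodule.fg_iff_exists_fin_generating_family.1 hF
  choose g hgN hgX hga using fun i => mem_coeffIdeal.1 (hFm (Submodule.subset_span ⟨i, rfl⟩))
  obtain ⟨u, hu, htors⟩ := hA.exists_mul_eq_zero_of_pow_mul_eq_zero hs
  obtain ⟨t, ht, hst⟩ := hanti s hs
  obtain ⟨w, hw0, hw⟩ := exists_seq_eq_mul_succ htors hst
  refine ⟨m, Ideal.span (Set.range g), Submodule.fg_span (Set.finite_range g),
    Ideal.span_le.2 (Set.range_subset_iff.2 hgN), u * t, mul_mem hu ht,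
    fun f hfN hfX => hw0 ▸ C_mul_mem_span_range hgN hgX (fun k p hpN hpX => ?_) hw hfN hfX⟩
  simpa [hga] using hsF _ (Submodule.mem_iSup_of_mem (m + k) (mem_coeffIdeal.2 ⟨p, hpN, hpX, rfl⟩))

end

end PowerSeries

theorem stmt16 {A : Type*} [CommRing A] (S : Submonoid A)
    (hanti : ∀ s ∈ S, ∃ t ∈ S, ∀ n : ℕ, s ^ n ∣ t)
    (hA : SNoeth S A) :
    SNoeth (S.map (PowerSeries.C (R := A))) (PowerSeries A) := by
  intro N
  obtain ⟨m, J₂, hJ₂, hJ₂N, s₂, hs₂, htail⟩ := PowerSeries.exists_fg_C_mul_mem_of_X_pow_dvd N hA hanti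
  obtain ⟨J₁, hJ₁, hJ₁N, s₁, hs₁, hlow⟩ := PowerSeries.exists_fg_raise_order N hA m
  refine ⟨J₁ ⊔ J₂, Submodule.FG.sup hJ₁ hJ₂, sup_le hJ₁N hJ₂N, PowerSeries.C (s₂ * s₁),
    ⟨_, mul_mem hs₂ hs₁, rfl⟩, fun f hf => ?_⟩
  obtain ⟨f', hf'N, hf'X, hff'⟩ := hlow f hf
  have hsplit : PowerSeries.C (s₂ * s₁) * f =
      PowerSeries.C s₂ * (PowerSeries.C s₁ * f - f') + PowerSeries.C s₂ * f' := by
    rw [map_mul]; ring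
  rw [smul_eq_mul, hsplit]
  exact add_mem (Submodule.mem_sup_left (J₁.mul_mem_left _ hff'))
    (Submodule.mem_sup_right (htail f' hf'N hf'X))
end

section
/- (Relative Kaplansky theorem) Let A be a commutative ring and S ⊆ A a multiplicatively closed subset. Then every ideal of A is S-principal if and only if every prime ideal p of A with p ∩ S = ∅ is S-principal. -/
/-!
Being `S`-principal is an Oka property of ideals: if `I ⊔ (a)` and `(I : a)` are `S`-principal,
with generators `c` and `d`, then `I` is `S`-principal with generator `c * d`. It also passes to
unions of chains, since a generator and the element of `S` already live in a member of the chain.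
By Zorn, an ideal maximal among the non-`S`-principal ones exists as soon as one does, and Oka's
argument makes it prime; it cannot meet `S`, because an ideal containing `s ∈ S` is `S`-principal
with generator `s`.
-/

/-- An ideal `I` is `S`-principal if there are `a ∈ I` and `s ∈ S` with
`I·s ⊆ aA ⊆ I`. -/
def SPrincipal {A : Type*} [CommRing A] (S : Submonoid A) (I : Ideal A) : Prop :=
  ∃ a ∈ I, ∃ s ∈ S, ∀ x ∈ I, s * x ∈ Ideal.span {a}

open Ideal

section

variable {A : Type*} [CommRing A] {S : Submonoid A}

theorem SPrincipal.of_mem {I : Ideal A} {s : A} (hsS : s ∈ S) (hsI : s ∈ I) : SPrincipal S I :=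
  ⟨s, hsI, s, hsS, fun x _ ↦ mem_span_singleton'.2 ⟨x, mul_comm x s⟩⟩

theorem SPrincipal.exists_mem_of_sSup {C : Set (Ideal A)} (hC : IsChain (· ≤ ·) C)
    (hne : C.Nonempty) (h : SPrincipal S (sSup C)) : ∃ I ∈ C, SPrincipal S I := by
  obtain ⟨a, ha, s, hs, hsC⟩ := h
  obtain ⟨I, hIC, haI⟩ := (Submodule.mem_sSup_of_directed hne hC.directedOn).1 ha
  exact ⟨I, hIC, a, haI, s, hs, fun x hx ↦ hsC x (le_sSup hIC hx)⟩

variable (S) in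
theorem Ideal.isOka_sPrincipal : IsOka (SPrincipal S) where
  top := .of_mem S.one_mem trivial
  oka {I a} := by
    rintro ⟨c, hc, s, hsS, hs⟩ ⟨d, hd, t, htS, ht⟩
    have hcd : c * d ∈ I := by
      have hsup : I ⊔ span {a} ≤ I.colon (span {d}) :=
        sup_le le_colon <| (span_singleton_le_iff_mem _).2 <| mem_colon_span_singleton.2 <|
          mul_comm a d ▸ mem_colon_span_singleton.1 hd
      exact mem_colon_span_singleton.1 (hsup hc)
    refine ⟨c * d, hcd, s * s * t, S.mul_mem (S.mul_mem hsS hsS) htS, fun x hx ↦ ?_⟩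
    obtain ⟨u, hu⟩ := mem_span_singleton'.1 (hs x (mem_sup_left hx))
    obtain ⟨v, hv⟩ := mem_span_singleton'.1 (hs a (mem_sup_right (mem_span_singleton_self a)))
    have hsu : s * u ∈ I.colon (span {a}) := by
      rw [mem_colon_span_singleton,
        show s * u * a = v * (s * x) by linear_combination (-u) * hv + v * hu]
      exact I.mul_mem_left _ (I.mul_mem_left _ hx)
    obtain ⟨w, hw⟩ := mem_span_singleton'.1 (ht _ hsu)
    refine mem_span_singleton'.2 ⟨w, ?_⟩
    calc w * (c * d) = c * (w * d) := by ring
      _ = s * t * (u * c) := by rw [hw]; ring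
      _ = s * s * t * x := by rw [hu]; ring

end

theorem stmt19 {A : Type*} [CommRing A] (S : Submonoid A) :
    (∀ I : Ideal A, SPrincipal S I) ↔
      (∀ p : Ideal A, p.IsPrime → (∀ s ∈ S, s ∉ p) → SPrincipal S p) := by
  refine ⟨fun h p _ _ ↦ h p, fun h ↦ ?_⟩
  refine (isOka_sPrincipal S).forall_of_forall_prime'
    (fun C _ hC J hJ ↦ SPrincipal.exists_mem_of_sSup hC ⟨J, hJ⟩) fun p hp ↦ ?_
  by_cases hdisj : ∀ s ∈ S, s ∉ p
  · exact h p hp hdisj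
  · push Not at hdisj
    obtain ⟨s, hsS, hsp⟩ := hdisj
    exact .of_mem hsS hsp
end
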